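/- arXiv:2605.02874 — 2 statements merged into one kernel-verified Lean document; each statement's English description precedes it below -/
import Mathlib

section
/- Let l₀, m₀, s₀, l, m, s, c be natural numbers with l ≤ l₀, m ≤ m₀, s ≤ s₀, l + m + s ≥ 2, c = l₀ + m₀ + s₀, and (l, m) ≠ (0, 0). Define the initial percentile p₀ = (l₀ + 0.5·m₀ + 0.5)/(c + 1) and the new percentile p₁ = (l₀ − l + 0.5·(m₀ − m) + 1.5)/(c − (l+m+s) + 2). Then p₁ < p₀ if and only if (l + 0.5·m − 1)/(l + m + s − 1) > p₀, and p₁ > p₀ if and only if (l + 0.5·m − 1)/(l + m + s − 1) < p₀. -/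
/-!
Write `p₁ = X / B` and `q = Y / D` with `B = c - (l + m + s) + 2` and `D = l + m + s - 1`.
Then `p₀ = (X + Y) / (B + D)` is the mediant of `p₁` and `q`, and `B, D > 0`, so `p₀` lies
strictly between `p₁` and `q` unless all three coincide.
-/

section Mediant

variable {α : Type*} [Field α] [LinearOrder α] [IsStrictOrderedRing α] {a b c d : α}

theorem div_lt_mediant_iff (hb : 0 < b) (hd : 0 < d) :
    a / b < (a + c) / (b + d) ↔ a * d < c * b := by
  rw [div_lt_div_iff₀ hb (add_pos hb hd)]
  constructor <;> intro h <;> linarith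

theorem mediant_lt_div_iff (hb : 0 < b) (hd : 0 < d) :
    (a + c) / (b + d) < c / d ↔ a * d < c * b := by
  rw [div_lt_div_iff₀ (add_pos hb hd) hd]
  constructor <;> intro h <;> linarith

theorem div_lt_mediant_iff_mediant_lt_div (hb : 0 < b) (hd : 0 < d) :
    a / b < (a + c) / (b + d) ↔ (a + c) / (b + d) < c / d :=
  (div_lt_mediant_iff hb hd).trans (mediant_lt_div_iff hb hd).symm

theorem mediant_lt_div_iff_div_lt_mediant (hb : 0 < b) (hd : 0 < d) :
    (a + c) / (b + d) < a / b ↔ c / d < (a + c) / (b + d) := by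
  rw [add_comm a, add_comm b]
  exact (div_lt_mediant_iff_mediant_lt_div hd hb).symm

end Mediant

theorem percentile_change_iff_general (l₀ m₀ s₀ l m s c : ℕ)
    (hl : l ≤ l₀) (hm : m ≤ m₀) (hs : s ≤ s₀) (hsum : 2 ≤ l + m + s)
    (hc : c = l₀ + m₀ + s₀) :
    (let p₀ : ℝ := ((l₀ : ℝ) + 0.5 * m₀ + 0.5) / ((c : ℝ) + 1)
     let p₁ : ℝ := ((l₀ : ℝ) - l + 0.5 * ((m₀ : ℝ) - m) + 1.5) / ((c : ℝ) - ((l : ℝ) + m + s) + 2)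
     (p₁ < p₀ ↔ ((l : ℝ) + 0.5 * m - 1) / ((l : ℝ) + m + s - 1) > p₀) ∧
     (p₁ > p₀ ↔ ((l : ℝ) + 0.5 * m - 1) / ((l : ℝ) + m + s - 1) < p₀)) := by
  have hn : (2 : ℝ) ≤ l + m + s := by exact_mod_cast hsum
  have hnc : (l : ℝ) + m + s ≤ c := by
    rw [hc]
    exact_mod_cast Nat.add_le_add (Nat.add_le_add hl hm) hs
  have hB : (0 : ℝ) < c - (l + m + s) + 2 := by linarith
  have hD : (0 : ℝ) < l + m + s - 1 := by linarith
  have hp₀ : ((l₀ : ℝ) + 0.5 * m₀ + 0.5) / ((c : ℝ) + 1) =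
      (((l₀ : ℝ) - l + 0.5 * ((m₀ : ℝ) - m) + 1.5) + ((l : ℝ) + 0.5 * m - 1)) /
        (((c : ℝ) - ((l : ℝ) + m + s) + 2) + ((l : ℝ) + m + s - 1)) := by
    congr 1 <;> ring
  dsimp only
  rw [hp₀]
  exact ⟨div_lt_mediant_iff_mediant_lt_div hB hD, mediant_lt_div_iff_div_lt_mediant hB hD⟩

theorem percentile_change_iff (l₀ m₀ s₀ l m s c : ℕ)
    (hl : l ≤ l₀) (hm : m ≤ m₀) (hs : s ≤ s₀) (hsum : 2 ≤ l + m + s)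
    (hc : c = l₀ + m₀ + s₀) (hlm : ¬(l = 0 ∧ m = 0)) :
    (let p₀ : ℝ := ((l₀ : ℝ) + 0.5 * m₀ + 0.5) / ((c : ℝ) + 1)
     let p₁ : ℝ := ((l₀ : ℝ) - l + 0.5 * ((m₀ : ℝ) - m) + 1.5) / ((c : ℝ) - ((l : ℝ) + m + s) + 2)
     (p₁ < p₀ ↔ ((l : ℝ) + 0.5 * m - 1) / ((l : ℝ) + m + s - 1) > p₀) ∧
     (p₁ > p₀ ↔ ((l : ℝ) + 0.5 * m - 1) / ((l : ℝ) + m + s - 1) < p₀)) :=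
  percentile_change_iff_general l₀ m₀ s₀ l m s c hl hm hs hsum hc
end

section
/- Let l₂, m₂ and l*, m*, s* be nonnegative integers with l₂ + m₂ ≥ l* + m* and s₂ = s*. Then (l₂ + 0.5·m₂ + 0.5)/(l₂ + m₂ + s₂ + 1) ≥ 0.5·(l* + m* + 1)/(l* + m* + s* + 1) ≥ 0.5·(m* + 1)/(l* + m* + s* + 1). -/
/-! Splitting `l₂ + m₂/2 + 1/2 = l₂/2 + (l₂ + m₂ + 1)/2` and dropping `l₂/2` reduces the first
inequality to the monotonicity of `a ↦ a / (a + s)`, applied with `a = l* + m* + 1 ≤ l₂ + m₂ + 1`.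
The second inequality only drops `l*` from a numerator. -/

theorem div_add_le_div_add_of_le {a b s : ℝ} (ha : 0 < a) (hab : a ≤ b) (hs : 0 ≤ s) :
    a / (a + s) ≤ b / (b + s) := by
  rw [div_le_div_iff₀ (by positivity) (by linarith)]
  nlinarith

theorem second_branch_inequality (l₂ m₂ s₂ lstar mstar sstar : ℕ)
    (hlm : lstar + mstar ≤ l₂ + m₂) (hs : s₂ = sstar) :
    ((l₂ : ℝ) + 0.5 * m₂ + 0.5) / ((l₂ : ℝ) + m₂ + s₂ + 1)
        ≥ 0.5 * ((lstar : ℝ) + mstar + 1) / ((lstar : ℝ) + mstar + sstar + 1) ∧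
    0.5 * ((lstar : ℝ) + mstar + 1) / ((lstar : ℝ) + mstar + sstar + 1)
        ≥ 0.5 * ((mstar : ℝ) + 1) / ((lstar : ℝ) + mstar + sstar + 1) := by
  subst hs
  have hlmR : (lstar : ℝ) + mstar ≤ l₂ + m₂ := by exact_mod_cast hlm
  refine ⟨?_, by gcongr; exact le_add_of_nonneg_left (Nat.cast_nonneg lstar)⟩
  calc 0.5 * ((lstar : ℝ) + mstar + 1) / (lstar + mstar + s₂ + 1)
      = 0.5 * (((lstar : ℝ) + mstar + 1) / (lstar + mstar + 1 + s₂)) := by ring_nf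
    _ ≤ 0.5 * (((l₂ : ℝ) + m₂ + 1) / (l₂ + m₂ + 1 + s₂)) :=
      mul_le_mul_of_nonneg_left
        (div_add_le_div_add_of_le (by positivity) (by linarith) (Nat.cast_nonneg s₂)) (by norm_num)
    _ = 0.5 * (((l₂ : ℝ) + m₂ + 1) / (l₂ + m₂ + s₂ + 1)) := by ring_nf
    _ ≤ 0.5 * ((l₂ : ℝ) / (l₂ + m₂ + s₂ + 1)) + 0.5 * (((l₂ : ℝ) + m₂ + 1) / (l₂ + m₂ + s₂ + 1)) :=
      le_add_of_nonneg_left (by positivity)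
    _ = ((l₂ : ℝ) + 0.5 * m₂ + 0.5) / (l₂ + m₂ + s₂ + 1) := by ring
end
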